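/- There is no group homomorphism f from the additive group L = {(a,b) ∈ ℤ² : a + b is even} to the multiplicative group ℂˣ such that f(γ) = −1 for every root γ ∈ Φ. (This is the nonexistence of an elliptic endoscopic torus of G₂ attached to the subgroup {±1} of the Weyl group.) -/

import Mathlib

/-! The roots `(2,0)` and `(1,1)` add up to the root `(3,1)`, so such an `f` would give
`-1 = f (3,1) = f (2,0) * f (1,1) = (-1) * (-1) = 1`. -/

noncomputable section

/-- The set of roots of `G₂`. -/
def Φ : Set (ℝ × ℝ) :=
  {(2,0), (-2,0), (1,1), (1,-1), (-1,1), (-1,-1),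
   (0,2), (0,-2), (3,1), (3,-1), (-3,1), (-3,-1)}

/-- The root lattice `L = {(a,b) ∈ ℤ² : a + b even}` of `G₂`, as an additive
subgroup of `ℝ²`. -/
def L : AddSubgroup (ℝ × ℝ) where
  carrier := {x | ∃ a b : ℤ, x = ((a : ℝ), (b : ℝ)) ∧ Even (a + b)}
  zero_mem' := ⟨0, 0, by norm_num <;> first | rfl | simp [Prod.ext_iff], by decide⟩
  add_mem' := by
    rintro x y ⟨a, b, rfl, hab⟩ ⟨c, d, rfl, hcd⟩
    exact ⟨a + c, b + d, by push_cast; rw [Prod.mk_add_mk],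
      by rw [show a + c + (b + d) = (a + b) + (c + d) by ring]; exact hab.add hcd⟩
  neg_mem' := by
    rintro x ⟨a, b, rfl, hab⟩
    exact ⟨-a, -b, by push_cast; rfl,
      by rw [show -a + -b = -(a + b) by ring]; exact hab.neg⟩

theorem neg_one_eq_one_of_map_add_eq_neg_one {G M : Type*} [Add G] [Monoid M] [HasDistribNeg M]
    {f : G → M} (hf : ∀ x y, f (x + y) = f x * f y) {x y : G}
    (hx : f x = -1) (hy : f y = -1) (hxy : f (x + y) = -1) : (-1 : M) = 1 := by
  rw [← hxy, hf, hx, hy, neg_one_mul, neg_neg]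

/-- There is no homomorphism from the root lattice `L` of `G₂` to `ℂˣ` taking the
value `-1` on every root: no elliptic endoscopic torus of `G₂` is attached to the
subgroup `{±1}` of the Weyl group. -/
theorem stmt14 :
    ¬ ∃ f : L → ℂˣ, (∀ x y : L, f (x + y) = f x * f y) ∧
      ∀ γ : L, (γ : ℝ × ℝ) ∈ Φ → f γ = -1 := by
  rintro ⟨f, hf, hΦ⟩
  let α : L := ⟨(2, 0), 2, 0, by norm_num, by decide⟩
  let β : L := ⟨(1, 1), 1, 1, by norm_num, by decide⟩
  have hα : (α : ℝ × ℝ) ∈ Φ := by simp [α, Φ]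
  have hβ : (β : ℝ × ℝ) ∈ Φ := by simp [β, Φ]
  have hαβ : ((α + β : L) : ℝ × ℝ) ∈ Φ := by norm_num [α, β, Φ]
  exact neg_units_ne_self 1 <|
    neg_one_eq_one_of_map_add_eq_neg_one hf (hΦ α hα) (hΦ β hβ) (hΦ _ hαβ)
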